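/- Let X be a real random variable with 0 < E|X| < ∞, and let K be the inverse function of G(t) = t²/(H(t) + t M(t)) where H(t) = E[X²1{|X|≤t}] and M(t) = E[|X|1{|X|>t}]. Then K(x)/√x is nondecreasing in x and converges to (E X²)^{1/2} ∈ (0, ∞] as x → ∞. -/

import Mathlib

open MeasureTheory ProbabilityTheory Filter Set
open scoped ProbabilityTheory ENNReal

/-!
The denominator of `G` is the single integral `F t = E[min(X², t|X|)]`, so that
`x = G (K x)` reads `x = K(x)² / F(K x)`, i.e. `K x / √x = √(F (K x))`. Both `F` and `K` are
nondecreasing (`t ↦ t² / F t` is, because `min(y², t y) / t²` decreases in `t`), and `K x → ∞`;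
by monotone convergence `F t ↑ E[X²]`.
-/

theorem Monotone.tendsto_atTop_of_tendsto_natCast {α : Type*} [TopologicalSpace α] [Preorder α]
    [OrderTopology α] {f : ℝ → α} {a : α} (hf : Monotone f)
    (h : Tendsto (fun n : ℕ => f n) atTop (nhds a)) : Tendsto f atTop (nhds a) := by
  refine tendsto_of_tendsto_of_tendsto_of_le_of_le' (h.comp tendsto_nat_floor_atTop)
    (h.comp tendsto_nat_ceil_atTop) ?_ (Eventually.of_forall fun t => hf (Nat.le_ceil t))
  filter_upwards [eventually_ge_atTop 0] with t ht using hf (Nat.floor_le ht)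

theorem MonotoneOn.monotoneOn_of_leftInvOn {α β : Type*} [PartialOrder α] [LinearOrder β]
    {G : β → α} {K : α → β} {s : Set α} {t : Set β} (hG : MonotoneOn G t) (hK : MapsTo K s t)
    (hGK : LeftInvOn G K s) : MonotoneOn K s := by
  intro x hx y hy hxy
  by_contra! hlt
  have hyx : y ≤ x := hGK hy ▸ hGK hx ▸ hG (hK hy) (hK hx) hlt.le
  exact hlt.ne (by rw [le_antisymm hxy hyx])

theorem tendsto_atTop_of_leftInvOn {G K : ℝ → ℝ} (hG : MonotoneOn G (Ioi 0))
    (hK : MapsTo K (Ioi 0) (Ioi 0)) (hGK : LeftInvOn G K (Ioi 0)) : Tendsto K atTop atTop := by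
  refine tendsto_atTop.2 fun b => ?_
  have hT : (0 : ℝ) < max b 1 := lt_max_of_lt_right one_pos
  filter_upwards [eventually_gt_atTop (max (G (max b 1)) 0)] with x hx
  rw [max_lt_iff] at hx
  by_contra! hKx
  have hle : G (K x) ≤ G (max b 1) := hG (hK hx.2) hT (hKx.le.trans (le_max_left b 1))
  rw [hGK hx.2] at hle
  exact hle.not_gt hx.1

theorem sq_mul_min_le {s t y : ℝ} (hs : 0 ≤ s) (hst : s ≤ t) (hy : 0 ≤ y) :
    s ^ 2 * min (y ^ 2) (t * y) ≤ t ^ 2 * min (y ^ 2) (s * y) := by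
  rw [mul_min_of_nonneg _ _ (sq_nonneg s), mul_min_of_nonneg _ _ (sq_nonneg t)]
  refine min_le_min (by gcongr) ?_
  nlinarith [mul_nonneg (mul_nonneg hs (hs.trans hst)) hy]

theorem div_sqrt_sq_div {t : ℝ} (ht : 0 < t) (a : ℝ) : t / √(t ^ 2 / a) = √a := by
  rw [Real.sqrt_div (sq_nonneg t), Real.sqrt_sq ht.le, div_div_cancel₀ ht.ne']

theorem ite_sq_add_mul_ite_abs (t y : ℝ) :
    (if |y| ≤ t then y ^ 2 else 0) + t * (if t < |y| then |y| else 0) = min (y ^ 2) (t * |y|) := by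
  rw [← sq_abs y]
  split_ifs with h h'
  · exact absurd h' (not_lt.2 h)
  · rw [mul_zero, add_zero, min_eq_left (by nlinarith [abs_nonneg y])]
  · rw [zero_add, min_eq_right (by nlinarith [abs_nonneg y])]
  · exact absurd (not_le.1 h) ‹_›

section TruncatedSecondMoment

variable {Ω : Type*} [MeasurableSpace Ω] {μ : Measure Ω} {X : Ω → ℝ}

noncomputable def truncatedSecondMoment (μ : Measure Ω) (X : Ω → ℝ) (t : ℝ) : ℝ :=
  ∫ ω, min (X ω ^ 2) (t * |X ω|) ∂μ

theorem integrable_min_sq_mul_abs (hX : Integrable X μ) (t : ℝ) :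
    Integrable (fun ω => min (X ω ^ 2) (t * |X ω|)) μ := by
  refine (hX.abs.const_mul |t|).mono'
    ((by fun_prop : Continuous fun y : ℝ => min (y ^ 2) (t * |y|)).comp_aestronglyMeasurable
      hX.aestronglyMeasurable) (Eventually.of_forall fun ω => ?_)
  rw [Real.norm_eq_abs]
  rcases le_total (X ω ^ 2) (t * |X ω|) with h | h
  · rw [min_eq_left h, abs_of_nonneg (sq_nonneg _)]
    exact h.trans (mul_le_mul_of_nonneg_right (le_abs_self t) (abs_nonneg _))
  · rw [min_eq_right h, abs_mul, abs_abs]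

theorem integral_ite_sq_add_mul_integral_ite (hX : Integrable X μ) (t : ℝ) :
    ∫ ω, (if |X ω| ≤ t then X ω ^ 2 else 0) ∂μ + t * ∫ ω, (if t < |X ω| then |X ω| else 0) ∂μ =
      truncatedSecondMoment μ X t := by
  have hM : Integrable (fun ω => if t < |X ω| then |X ω| else 0) μ := by
    refine hX.abs.mono' (((Measurable.ite (measurableSet_lt measurable_const measurable_abs)
      measurable_abs measurable_const).comp_aemeasurable hX.aemeasurable).aestronglyMeasurable)
      (Eventually.of_forall fun ω => ?_)
    split_ifs <;> simp
  have hH : (fun ω => if |X ω| ≤ t then X ω ^ 2 else 0) =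
      fun ω => min (X ω ^ 2) (t * |X ω|) - t * (if t < |X ω| then |X ω| else 0) := by
    funext ω
    rw [← ite_sq_add_mul_ite_abs, add_sub_cancel_right]
  rw [hH, integral_sub (integrable_min_sq_mul_abs hX t) (hM.const_mul t), integral_const_mul,
    sub_add_cancel, truncatedSecondMoment]

theorem truncatedSecondMoment_mono (hX : Integrable X μ) : Monotone (truncatedSecondMoment μ X) :=
  fun _ _ hst => integral_mono (integrable_min_sq_mul_abs hX _) (integrable_min_sq_mul_abs hX _)
    fun _ => min_le_min le_rfl (mul_le_mul_of_nonneg_right hst (abs_nonneg _))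

theorem truncatedSecondMoment_nonpos {t : ℝ} (ht : t ≤ 0) : truncatedSecondMoment μ X t ≤ 0 :=
  integral_nonpos fun _ =>
    (min_le_right _ _).trans (mul_nonpos_of_nonpos_of_nonneg ht (abs_nonneg _))

theorem truncatedSecondMoment_pos (hX : Integrable X μ) (hpos : 0 < ∫ ω, |X ω| ∂μ) {t : ℝ}
    (ht : 0 < t) : 0 < truncatedSecondMoment μ X t := by
  have hnonneg : 0 ≤ fun ω => min (X ω ^ 2) (t * |X ω|) :=
    fun ω => le_min (sq_nonneg _) (mul_nonneg ht.le (abs_nonneg _))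
  have hsupp : Function.support (fun ω => min (X ω ^ 2) (t * |X ω|)) =
      Function.support fun ω => |X ω| := by
    ext ω
    simp only [Function.mem_support, ne_eq, abs_eq_zero]
    refine not_congr ⟨fun h => ?_, fun h => by simp [h]⟩
    by_contra h0
    exact (lt_min (by positivity) (mul_pos ht (abs_pos.2 h0))).ne' h
  rw [integral_pos_iff_support_of_nonneg (fun _ => abs_nonneg _) hX.abs] at hpos
  rw [truncatedSecondMoment, integral_pos_iff_support_of_nonneg hnonneg
    (integrable_min_sq_mul_abs hX t), hsupp]
  exact hpos

theorem sq_mul_truncatedSecondMoment_le (hX : Integrable X μ) {s t : ℝ} (hs : 0 ≤ s)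
    (hst : s ≤ t) : s ^ 2 * truncatedSecondMoment μ X t ≤ t ^ 2 * truncatedSecondMoment μ X s := by
  simp only [truncatedSecondMoment, ← integral_const_mul]
  refine integral_mono ((integrable_min_sq_mul_abs hX t).const_mul _)
    ((integrable_min_sq_mul_abs hX s).const_mul _) fun ω => ?_
  simpa only [sq_abs] using sq_mul_min_le hs hst (abs_nonneg (X ω))

theorem monotoneOn_sq_div_truncatedSecondMoment (hX : Integrable X μ)
    (hpos : 0 < ∫ ω, |X ω| ∂μ) :
    MonotoneOn (fun t => t ^ 2 / truncatedSecondMoment μ X t) (Ioi 0) :=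
  fun s hs t ht hst => by
    rw [div_le_div_iff₀ (truncatedSecondMoment_pos hX hpos hs)
      (truncatedSecondMoment_pos hX hpos ht)]
    exact sq_mul_truncatedSecondMoment_le hX (le_of_lt hs) hst

theorem tendsto_ofReal_truncatedSecondMoment (hX : Integrable X μ) :
    Tendsto (fun t => ENNReal.ofReal (truncatedSecondMoment μ X t)) atTop
      (nhds (∫⁻ ω, ENNReal.ofReal (X ω ^ 2) ∂μ)) := by
  refine (ENNReal.ofReal_mono.comp
    (truncatedSecondMoment_mono hX)).tendsto_atTop_of_tendsto_natCast ?_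
  have hlintegral (n : ℕ) : ENNReal.ofReal (truncatedSecondMoment μ X n) =
      ∫⁻ ω, ENNReal.ofReal (min (X ω ^ 2) (n * |X ω|)) ∂μ :=
    ofReal_integral_eq_lintegral_ofReal (integrable_min_sq_mul_abs hX n)
      (Eventually.of_forall fun _ => le_min (sq_nonneg _) (by positivity))
  simp only [Function.comp_apply, hlintegral]
  have hXm := hX.aemeasurable
  refine lintegral_tendsto_of_tendsto_of_monotone (fun n => by fun_prop)
    (ae_of_all _ fun ω m n hmn => ENNReal.ofReal_le_ofReal (min_le_min le_rfl
      (mul_le_mul_of_nonneg_right (Nat.cast_le.2 hmn) (abs_nonneg _))))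
    (ae_of_all _ fun ω => tendsto_atTop_of_eventually_const (i₀ := ⌈|X ω|⌉₊) fun n hn => ?_)
  rw [min_eq_left]
  calc X ω ^ 2 = |X ω| * |X ω| := by rw [← sq_abs, sq]
    _ ≤ n * |X ω| := mul_le_mul_of_nonneg_right (Nat.ceil_le.1 hn) (abs_nonneg _)

end TruncatedSecondMoment

theorem stmt_1 {Ω : Type*} [MeasureSpace Ω]
    (X : Ω → ℝ)
    (hInt : Integrable X) (hpos : 0 < ∫ ω, |X ω|)
    (H M G K : ℝ → ℝ)
    (hH : ∀ t, H t = ∫ ω, (if |X ω| ≤ t then (X ω) ^ 2 else 0))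
    (hM : ∀ t, M t = ∫ ω, (if t < |X ω| then |X ω| else 0))
    (hG : ∀ t, G t = t ^ 2 / (H t + t * M t))
    (hGK : ∀ x > 0, G (K x) = x) :
    MonotoneOn (fun x => K x / Real.sqrt x) (Ioi 0) ∧
    0 < (∫⁻ ω, ENNReal.ofReal ((X ω) ^ 2)) ^ (1/2 : ℝ) ∧
    Tendsto (fun x => ENNReal.ofReal (K x / Real.sqrt x)) atTop
      (nhds ((∫⁻ ω, ENNReal.ofReal ((X ω) ^ 2)) ^ (1/2 : ℝ))) := by
  set F := truncatedSecondMoment ℙ X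
  have hGF (t : ℝ) : G t = t ^ 2 / F t := by
    rw [hG, hH, hM, integral_ite_sq_add_mul_integral_ite hInt]
  have hGmono : MonotoneOn G (Ioi 0) :=
    (monotoneOn_sq_div_truncatedSecondMoment hInt hpos).congr fun t _ => (hGF t).symm
  have hKpos : MapsTo K (Ioi 0) (Ioi 0) := fun x hx => lt_of_not_ge fun hKx => by
    have hx' : x ≤ 0 := hGK x hx ▸ hGF (K x) ▸
      div_nonpos_of_nonneg_of_nonpos (sq_nonneg _) (truncatedSecondMoment_nonpos hKx)
    exact hx'.not_gt hx
  have hKmono := hGmono.monotoneOn_of_leftInvOn hKpos hGK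
  have hratio (x : ℝ) (hx : 0 < x) : K x / √x = √(F (K x)) := by
    calc K x / √x = K x / √(K x ^ 2 / F (K x)) := by rw [← hGF, hGK x hx]
      _ = √(F (K x)) := div_sqrt_sq_div (hKpos hx) _
  have hlim := tendsto_ofReal_truncatedSecondMoment hInt
  refine ⟨fun x hx y hy hxy => ?_, ?_, ?_⟩
  · simp only [hratio x hx, hratio y hy]
    exact Real.sqrt_le_sqrt (truncatedSecondMoment_mono hInt (hKmono hx hy hxy))
  · refine ENNReal.rpow_pos_of_nonneg ?_ (by norm_num)
    exact (ENNReal.ofReal_pos.2 (truncatedSecondMoment_pos hInt hpos one_pos)).trans_le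
      ((ENNReal.ofReal_mono.comp (truncatedSecondMoment_mono hInt)).ge_of_tendsto hlim 1)
  · refine ((ENNReal.continuous_rpow_const.tendsto _).comp (hlim.comp
      (tendsto_atTop_of_leftInvOn hGmono hKpos hGK))).congr' ?_
    filter_upwards [eventually_gt_atTop 0] with x hx
    rw [Function.comp_apply, Function.comp_apply, hratio x hx, Real.sqrt_eq_rpow,
      ENNReal.ofReal_rpow_of_nonneg (truncatedSecondMoment_pos hInt hpos (hKpos hx)).le
        (by norm_num)]
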